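/- arXiv:2601.14191 — 9 statements merged into one kernel-verified Lean document; each statement's English description precedes it below -/
import Mathlib

section
/- Let A, B be discrete random variables with A influencing B via potential outcomes, i.e., B = Σ_a δ_a(A)·B_{do(A=a)}, and let X be an instrumental variable satisfying B_{do(A=a,X=x)} = B_{do(A=a)} and X jointly independent of all potential outcomes. Then for all a, b: Pr(B_{do(A=a)} = b) ≥ sup_{x∈𝒳} Pr(A=a, B=b | X=x). -/
open scoped Classical
open Finset

/-- In a potential outcome model `(A, B, Bdo)` with instrumental
variable `X` (modelled via the family of conditional distributions `P x` given
`X = x`, with the joint distribution of all potential outcomes independent of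
`x`), for all `a`, `b`:
`Pr(B_{do(A=a)} = b) ≥ sup_{x ∈ 𝒳} Pr(A = a, B = b | X = x)`. -/
theorem stmt_0 {Ω 𝒜 ℬ 𝒳 : Type} [Fintype Ω]
    (P : 𝒳 → Ω → ℝ)
    (hPpos : ∀ x ω, 0 ≤ P x ω) (hPsum : ∀ x, ∑ ω, P x ω = 1)
    (A : Ω → 𝒜) (Bdo : 𝒜 → Ω → ℬ) (B : Ω → ℬ)
    (hB : ∀ ω, B ω = Bdo (A ω) ω)
    (hind : ∀ (x x' : 𝒳) (g : 𝒜 → ℬ),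
      ∑ ω ∈ univ.filter (fun ω => ∀ a, Bdo a ω = g a), P x ω =
      ∑ ω ∈ univ.filter (fun ω => ∀ a, Bdo a ω = g a), P x' ω)
    (a : 𝒜) (b : ℬ) (x₀ : 𝒳) :
    ∀ x : 𝒳,
      ∑ ω ∈ univ.filter (fun ω => A ω = a ∧ B ω = b), P x ω ≤
      ∑ ω ∈ univ.filter (fun ω => Bdo a ω = b), P x₀ ω := by
  intro x
  set f : Ω → 𝒜 → ℬ := fun ω a' => Bdo a' ω with hf
  have hsub : ∑ ω ∈ univ.filter (fun ω => A ω = a ∧ B ω = b), P x ω ≤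
      ∑ ω ∈ univ.filter (fun ω => Bdo a ω = b), P x ω := by
    apply Finset.sum_le_sum_of_subset_of_nonneg
    · intro ω hω
      simp only [mem_filter, mem_univ, true_and] at *
      obtain ⟨hA, hBb⟩ := hω
      rw [hB ω, hA] at hBb
      exact hBb
    · intro ω _ _; exact hPpos x ω
  refine hsub.trans (le_of_eq ?_)
  have key : ∀ y : 𝒳, ∑ ω ∈ univ.filter (fun ω => Bdo a ω = b), P y ω =
      ∑ g ∈ (univ.filter (fun ω => Bdo a ω = b)).image f,
        ∑ ω ∈ univ.filter (fun ω => ∀ a', Bdo a' ω = g a'), P y ω := by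
    intro y
    rw [← Finset.sum_fiberwise_of_maps_to
      (fun ω hω => Finset.mem_image_of_mem f hω) (P y)]
    apply Finset.sum_congr rfl
    intro g hg
    apply Finset.sum_congr _ (fun _ _ => rfl)
    simp only [Finset.mem_image, mem_filter, mem_univ, true_and] at hg
    obtain ⟨ω₀, hω₀, hgω₀⟩ := hg
    ext ω
    simp only [mem_filter, mem_univ, true_and]
    constructor
    · rintro ⟨_, hfg⟩ a'
      rw [← hfg]
    · intro h
      have hfg : f ω = g := funext h
      refine ⟨?_, hfg⟩
      rw [h a, ← hgω₀]
      exact hω₀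
  rw [key x, key x₀]
  exact Finset.sum_congr rfl (fun g _ => hind x x₀ g)
end

section
/- Under the same instrumental-variable assumptions, with A binary (𝒜 = {0,1}): for all b₀, b₁, Pr(B_{do(A=0)}=b₀, B_{do(A=1)}=b₁) ≤ inf_{x∈𝒳} [Pr(A=0, B=b₀ | X=x) + Pr(A=1, B=b₁ | X=x)]. -/
open scoped Classical
open Finset

/-- Under the instrumental-variable assumptions with `A` binary,
for all `b₀, b₁`:
`Pr(B_{do(A=0)} = b₀, B_{do(A=1)} = b₁)
  ≤ inf_{x ∈ 𝒳} [Pr(A=0, B=b₀ | X=x) + Pr(A=1, B=b₁ | X=x)]`. -/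
theorem stmt_1 {Ω ℬ 𝒳 : Type} [Fintype Ω]
    (P : 𝒳 → Ω → ℝ)
    (hPpos : ∀ x ω, 0 ≤ P x ω) (hPsum : ∀ x, ∑ ω, P x ω = 1)
    (A : Ω → Fin 2) (Bdo : Fin 2 → Ω → ℬ) (B : Ω → ℬ)
    (hB : ∀ ω, B ω = Bdo (A ω) ω)
    (hind : ∀ (x x' : 𝒳) (g : Fin 2 → ℬ),
      ∑ ω ∈ univ.filter (fun ω => ∀ a, Bdo a ω = g a), P x ω =
      ∑ ω ∈ univ.filter (fun ω => ∀ a, Bdo a ω = g a), P x' ω)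
    (b₀ b₁ : ℬ) (x₀ : 𝒳) :
    ∀ x : 𝒳,
      ∑ ω ∈ univ.filter (fun ω => Bdo 0 ω = b₀ ∧ Bdo 1 ω = b₁), P x₀ ω ≤
      ∑ ω ∈ univ.filter (fun ω => A ω = 0 ∧ B ω = b₀), P x ω +
      ∑ ω ∈ univ.filter (fun ω => A ω = 1 ∧ B ω = b₁), P x ω := by
  intro x
  have key : ∑ ω ∈ univ.filter (fun ω => Bdo 0 ω = b₀ ∧ Bdo 1 ω = b₁), P x₀ ω
      = ∑ ω ∈ univ.filter (fun ω => Bdo 0 ω = b₀ ∧ Bdo 1 ω = b₁), P x ω := by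
    have h := hind x₀ x ![b₀, b₁]
    simpa [Fin.forall_fin_two] using h
  rw [key, ← Finset.sum_filter_add_sum_filter_not
      (univ.filter (fun ω => Bdo 0 ω = b₀ ∧ Bdo 1 ω = b₁)) (fun ω => A ω = 0)]
  have h2 : ∀ a : Fin 2, ¬ a = 0 → a = 1 := by decide
  apply add_le_add
  · apply Finset.sum_le_sum_of_subset_of_nonneg
    · intro ω hω
      simp only [Finset.mem_filter, Finset.mem_univ, true_and] at hω ⊢
      refine ⟨hω.2, ?_⟩
      rw [hB, hω.2]
      exact hω.1.1
    · intro ω _ _; exact hPpos x ω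
  · apply Finset.sum_le_sum_of_subset_of_nonneg
    · intro ω hω
      simp only [Finset.mem_filter, Finset.mem_univ, true_and] at hω ⊢
      have hA1 := h2 _ hω.2
      refine ⟨hA1, ?_⟩
      rw [hB, hA1]
      exact hω.1.2
    · intro ω _ _; exact hPpos x ω
end

section
/- Pearl's instrumental inequality: under the instrumental-variable assumptions, max_{a∈𝒜} Σ_{b∈ℬ} sup_{x∈𝒳} Pr(A=a, B=b | X=x) ≤ 1. -/
open scoped Classical
open Finset

/-- Pearl's instrumental inequality. Under the
instrumental-variable assumptions (potential outcome model with instrument `X`),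
`max_{a ∈ 𝒜} Σ_{b ∈ ℬ} sup_{x ∈ 𝒳} Pr(A=a, B=b | X=x) ≤ 1`. -/
theorem stmt_2 {Ω 𝒜 ℬ 𝒳 : Type} [Fintype Ω] [Fintype ℬ] [Fintype 𝒳] [Nonempty 𝒳]
    (P : 𝒳 → Ω → ℝ)
    (hPpos : ∀ x ω, 0 ≤ P x ω) (hPsum : ∀ x, ∑ ω, P x ω = 1)
    (A : Ω → 𝒜) (Bdo : 𝒜 → Ω → ℬ) (B : Ω → ℬ)
    (hB : ∀ ω, B ω = Bdo (A ω) ω)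
    (hind : ∀ (x x' : 𝒳) (g : 𝒜 → ℬ),
      ∑ ω ∈ univ.filter (fun ω => ∀ a, Bdo a ω = g a), P x ω =
      ∑ ω ∈ univ.filter (fun ω => ∀ a, Bdo a ω = g a), P x' ω) :
    ∀ a : 𝒜,
      ∑ b : ℬ, univ.sup' univ_nonempty
        (fun x : 𝒳 => ∑ ω ∈ univ.filter (fun ω => A ω = a ∧ B ω = b), P x ω) ≤ 1 := by
  intro a
  obtain ⟨x₀⟩ := (inferInstance : Nonempty 𝒳)
  have key : ∀ (b : ℬ) (x : 𝒳),
      ∑ ω ∈ univ.filter (fun ω => Bdo a ω = b), P x ω =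
      ∑ ω ∈ univ.filter (fun ω => Bdo a ω = b), P x₀ ω := by
    intro b x
    have h : ∀ y : 𝒳, ∑ ω ∈ univ.filter (fun ω => Bdo a ω = b), P y ω =
        ∑ g ∈ (univ.filter (fun ω => Bdo a ω = b)).image (fun ω a' => Bdo a' ω),
          ∑ ω ∈ univ.filter (fun ω => ∀ a', Bdo a' ω = g a'), P y ω := by
      intro y
      refine (Finset.sum_image'
        (f := fun g' => ∑ ω ∈ univ.filter (fun ω => ∀ a', Bdo a' ω = g' a'), P y ω)
        (g := fun ω a' => Bdo a' ω) (fun ω => P y ω) (fun c hc => ?_)).symm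
      refine Finset.sum_congr ?_ fun _ _ => rfl
      ext ω
      simp only [mem_filter, mem_univ, true_and, funext_iff] at *
      constructor
      · intro hω
        exact ⟨(hω a).trans hc, hω⟩
      · exact fun hω => hω.2
    rw [h x, h x₀]
    exact Finset.sum_congr rfl fun g _ => hind x x₀ g
  have hsub : ∀ (b : ℬ) (x : 𝒳),
      ∑ ω ∈ univ.filter (fun ω => A ω = a ∧ B ω = b), P x ω ≤
      ∑ ω ∈ univ.filter (fun ω => Bdo a ω = b), P x₀ ω := by
    intro b x
    rw [← key b x]
    apply Finset.sum_le_sum_of_subset_of_nonneg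
    · intro ω hω
      simp only [mem_filter, mem_univ, true_and] at *
      rw [← hω.1, ← hB ω]
      exact hω.2
    · intro ω _ _
      exact hPpos x ω
  calc ∑ b : ℬ, univ.sup' univ_nonempty
        (fun x : 𝒳 => ∑ ω ∈ univ.filter (fun ω => A ω = a ∧ B ω = b), P x ω)
      ≤ ∑ b : ℬ, ∑ ω ∈ univ.filter (fun ω => Bdo a ω = b), P x₀ ω := by
        refine Finset.sum_le_sum fun b _ => ?_
        exact Finset.sup'_le _ _ fun x _ => hsub b x
    _ = ∑ ω, P x₀ ω := Finset.sum_fiberwise univ (fun ω => Bdo a ω) (P x₀)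
    _ = 1 := hPsum x₀
end

section
/- Classical instrumental (Kédagni–Mourifié-type) inequality: under the instrumental-variable assumptions with A binary and B finite, Σ_{b₀,b₁∈ℬ} inf_{x∈𝒳} [Pr(A=0, B=b₀ | X=x) + Pr(A=1, B=b₁ | X=x)] ≥ 1. -/
open scoped Classical
open Finset

/-- Kédagni–Mourifié-type instrumental inequality. Under the
instrumental-variable assumptions with `A` binary and `B` finite,
`Σ_{b₀,b₁ ∈ ℬ} inf_{x ∈ 𝒳} [Pr(A=0, B=b₀ | X=x) + Pr(A=1, B=b₁ | X=x)] ≥ 1`. -/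
theorem stmt_3 {Ω ℬ 𝒳 : Type} [Fintype Ω] [Fintype ℬ] [Fintype 𝒳] [Nonempty 𝒳]
    (P : 𝒳 → Ω → ℝ)
    (hPpos : ∀ x ω, 0 ≤ P x ω) (hPsum : ∀ x, ∑ ω, P x ω = 1)
    (A : Ω → Fin 2) (Bdo : Fin 2 → Ω → ℬ) (B : Ω → ℬ)
    (hB : ∀ ω, B ω = Bdo (A ω) ω)
    (hind : ∀ (x x' : 𝒳) (g : Fin 2 → ℬ),
      ∑ ω ∈ univ.filter (fun ω => ∀ a, Bdo a ω = g a), P x ω =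
      ∑ ω ∈ univ.filter (fun ω => ∀ a, Bdo a ω = g a), P x' ω) :
    1 ≤ ∑ b₀ : ℬ, ∑ b₁ : ℬ, univ.inf' univ_nonempty
      (fun x : 𝒳 =>
        ∑ ω ∈ univ.filter (fun ω => A ω = 0 ∧ B ω = b₀), P x ω +
        ∑ ω ∈ univ.filter (fun ω => A ω = 1 ∧ B ω = b₁), P x ω) := by
  obtain ⟨x₀⟩ := (inferInstance : Nonempty 𝒳)
  set q : ℬ → ℬ → ℝ := fun b₀ b₁ =>
    ∑ ω ∈ univ.filter (fun ω => Bdo 0 ω = b₀ ∧ Bdo 1 ω = b₁), P x₀ ω with hq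
  have hfilter : ∀ (b₀ b₁ : ℬ) (ω : Ω),
      (∀ a, Bdo a ω = (![b₀, b₁]) a) ↔ (Bdo 0 ω = b₀ ∧ Bdo 1 ω = b₁) := by
    intro b₀ b₁ ω
    rw [Fin.forall_fin_two]
    simp
  have hq1 : ∑ b₀ : ℬ, ∑ b₁ : ℬ, q b₀ b₁ = 1 := by
    rw [← hPsum x₀]
    simp only [hq, Finset.sum_filter]
    conv_lhs => enter [2, b₀]; rw [Finset.sum_comm]
    rw [Finset.sum_comm]
    refine Finset.sum_congr rfl fun ω _ => ?_
    simp [ite_and]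
  have hqle : ∀ (b₀ b₁ : ℬ) (x : 𝒳), q b₀ b₁ ≤
      ∑ ω ∈ univ.filter (fun ω => A ω = 0 ∧ B ω = b₀), P x ω +
      ∑ ω ∈ univ.filter (fun ω => A ω = 1 ∧ B ω = b₁), P x ω := by
    intro b₀ b₁ x
    have hx : q b₀ b₁ = ∑ ω ∈ univ.filter (fun ω => Bdo 0 ω = b₀ ∧ Bdo 1 ω = b₁), P x ω := by
      have := hind x₀ x (![b₀, b₁])
      simp only [hq]
      rw [show (univ.filter (fun ω => Bdo 0 ω = b₀ ∧ Bdo 1 ω = b₁)) =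
        (univ.filter (fun ω => ∀ a, Bdo a ω = (![b₀, b₁]) a)) from by
          apply Finset.filter_congr; intro ω _; simp [hfilter]]
      exact this
    rw [hx]
    have hdisj : Disjoint (univ.filter (fun ω => A ω = 0 ∧ B ω = b₀))
        (univ.filter (fun ω => A ω = 1 ∧ B ω = b₁)) := by
      rw [Finset.disjoint_filter]
      rintro ω _ ⟨h0, _⟩ ⟨h1, _⟩
      rw [h0] at h1; exact absurd h1 (by decide)
    rw [← Finset.sum_union hdisj]
    apply Finset.sum_le_sum_of_subset_of_nonneg
    · intro ω hω
      simp only [Finset.mem_filter, Finset.mem_union, Finset.mem_univ, true_and] at hω ⊢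
      obtain ⟨h0, h1⟩ := hω
      have hA : A ω = 0 ∨ A ω = 1 := by
        rcases (A ω) with ⟨_ | _ | n, hn⟩ <;> simp_all <;> omega
      rcases hA with hA | hA
      · left; exact ⟨hA, by rw [hB, hA, h0]⟩
      · right; exact ⟨hA, by rw [hB, hA, h1]⟩
    · intro ω _ _; exact hPpos x ω
  rw [← hq1]
  apply Finset.sum_le_sum; intro b₀ _
  apply Finset.sum_le_sum; intro b₁ _
  apply Finset.le_inf'
  intro x _
  exact hqle b₀ b₁ x
end

section
/- For binary A and B and correlations arising from a Bell-type local hidden variable model with post-selection Pr(A,B|X) = Pr(A,B|X, Y=A)_Bell where Pr(A,B|X,Y)_Bell = (1/4)[1 + (-1)^A ⟨Â_X⟩ + (-1)^B ⟨B̂_Y⟩ + (-1)^{A+B} ⟨Â_X B̂_Y⟩] for ±1-valued variables Â_X, B̂_Y, the quantity Γ = Σ_{b₀,b₁} inf_x Σ_a Pr(A=a, B=b_a | X=x) satisfies Γ = 2 − (CHSH′ + CHSH″)/4, where CHSH′ and CHSH″ are CHSH scores of the form ⟨Â_x B̂_y⟩ + ⟨Â_{x′} B̂_y⟩ + ⟨Â_x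 B̂_{y′}⟩ − ⟨Â_{x′} B̂_{y′}⟩ built from the correlators ⟨Â_X B̂_Y⟩. -/
open Finset

/-- For binary `A`, `B` and correlations arising from a Bell-type
local hidden variable model with post-selection `Y = A`,
`Pr(A,B|X) = (1/4)[1 + (-1)^A ⟨Â_X⟩ + (-1)^B ⟨B̂_A⟩ + (-1)^{A+B} ⟨Â_X B̂_A⟩]`,
the instrumental quantity `Γ = Σ_{b₀,b₁} inf_x Σ_a Pr(A=a, B=b_a | X=x)`
equals `2 − (CHSH′ + CHSH″)/4` for two CHSH-type scores built from the
correlators `E x y = ⟨Â_x B̂_y⟩` at suitable settings `x₀₀, x₀₁, x₁₀, x₁₁`. -/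
theorem stmt_4 {Ω 𝒳 : Type} [Fintype Ω] [Fintype 𝒳] [Nonempty 𝒳]
    (p : Ω → ℝ) (hp : ∀ ω, 0 ≤ p ω) (hp1 : ∑ ω, p ω = 1)
    (Ahat : 𝒳 → Ω → ℝ) (Bhat : Fin 2 → Ω → ℝ)
    (hA : ∀ x ω, Ahat x ω = 1 ∨ Ahat x ω = -1)
    (hBv : ∀ y ω, Bhat y ω = 1 ∨ Bhat y ω = -1)
    (E : 𝒳 → Fin 2 → ℝ)
    (hE : ∀ x y, E x y = ∑ ω, p ω * (Ahat x ω * Bhat y ω))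
    (Pr : Fin 2 → Fin 2 → 𝒳 → ℝ)
    (hPr : ∀ a b x, Pr a b x =
      (1/4) * (1 + (-1 : ℝ)^(a : ℕ) * (∑ ω, p ω * Ahat x ω)
        + (-1 : ℝ)^(b : ℕ) * (∑ ω, p ω * Bhat a ω)
        + (-1 : ℝ)^((a : ℕ) + (b : ℕ)) * (∑ ω, p ω * (Ahat x ω * Bhat a ω)))) :
    ∃ x₀₀ x₀₁ x₁₀ x₁₁ : 𝒳,
      (∑ b₀ : Fin 2, ∑ b₁ : Fin 2, univ.inf' univ_nonempty
        (fun x : 𝒳 => Pr 0 b₀ x + Pr 1 b₁ x))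
      = 2 - ((E x₀₀ 0 - E x₀₀ 1 + E x₁₁ 0 + E x₁₁ 1) +
             (-(E x₀₁ 0) + E x₀₁ 1 - E x₁₀ 0 - E x₁₀ 1)) / 4 := by

  have key : ∀ (b0 b1 : Fin 2) (x : 𝒳), Pr 0 b0 x + Pr 1 b1 x
      = 1/2 + (-1:ℝ)^(b0:ℕ) * ((∑ ω, p ω * Bhat 0 ω) + E x 0)/4
          + (-1:ℝ)^(b1:ℕ) * ((∑ ω, p ω * Bhat 1 ω) - E x 1)/4 := by
    intro b0 b1 x
    rw [hPr, hPr, hE, hE]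
    simp only [Fin.val_zero, Fin.val_one, pow_zero, pow_one, pow_add, zero_add]
    ring
  obtain ⟨m1, -, hm1⟩ := Finset.exists_min_image univ (fun x : 𝒳 => E x 0 - E x 1) univ_nonempty
  obtain ⟨M1, -, hM1⟩ := Finset.exists_max_image univ (fun x : 𝒳 => E x 0 - E x 1) univ_nonempty
  obtain ⟨m2, -, hm2⟩ := Finset.exists_min_image univ (fun x : 𝒳 => E x 0 + E x 1) univ_nonempty
  obtain ⟨M2, -, hM2⟩ := Finset.exists_max_image univ (fun x : 𝒳 => E x 0 + E x 1) univ_nonempty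
  refine ⟨M1, m1, m2, M2, ?_⟩
  have e00 : univ.inf' univ_nonempty (fun x : 𝒳 => Pr 0 0 x + Pr 1 0 x)
      = Pr 0 0 m1 + Pr 1 0 m1 := by
    refine le_antisymm (inf'_le _ (mem_univ m1)) (le_inf' _ _ ?_)
    intro x _
    have h := hm1 x (mem_univ x)
    rw [key, key]
    norm_num
    linarith
  have e01 : univ.inf' univ_nonempty (fun x : 𝒳 => Pr 0 0 x + Pr 1 1 x)
      = Pr 0 0 m2 + Pr 1 1 m2 := by
    refine le_antisymm (inf'_le _ (mem_univ m2)) (le_inf' _ _ ?_)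
    intro x _
    have h := hm2 x (mem_univ x)
    rw [key, key]
    norm_num
    linarith
  have e10 : univ.inf' univ_nonempty (fun x : 𝒳 => Pr 0 1 x + Pr 1 0 x)
      = Pr 0 1 M2 + Pr 1 0 M2 := by
    refine le_antisymm (inf'_le _ (mem_univ M2)) (le_inf' _ _ ?_)
    intro x _
    have h := hM2 x (mem_univ x)
    rw [key, key]
    norm_num
    linarith
  have e11 : univ.inf' univ_nonempty (fun x : 𝒳 => Pr 0 1 x + Pr 1 1 x)
      = Pr 0 1 M1 + Pr 1 1 M1 := by
    refine le_antisymm (inf'_le _ (mem_univ M1)) (le_inf' _ _ ?_)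
    intro x _
    have h := hM1 x (mem_univ x)
    rw [key, key]
    norm_num
    linarith
  rw [Fin.sum_univ_two]
  rw [Fin.sum_univ_two, Fin.sum_univ_two]
  rw [e00, e01, e10, e11, key, key, key, key]
  norm_num
  ring
end

section
/- Since each CHSH score is bounded in absolute value by 2√2 for quantum correlations (Tsirelson's bound), any quantum model in the instrumental scenario with binary A, B satisfies Σ_{b₀,b₁} inf_x Σ_a Pr(A=a, B=b_a | X=x) ≥ 2 − √2. -/
/-- Tsirelson-type bound in the instrumental scenario. If the
instrumental quantity `Γ` equals `2 − (CHSH′ + CHSH″)/4`, and each CHSH score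
obeys Tsirelson's bound `|CHSH| ≤ 2√2` (as quantum correlations do), then
`Γ ≥ 2 − √2`. -/
theorem stmt_5 (Γ CHSH' CHSH'' : ℝ)
    (hΓ : Γ = 2 - (CHSH' + CHSH'') / 4)
    (h1 : |CHSH'| ≤ 2 * Real.sqrt 2)
    (h2 : |CHSH''| ≤ 2 * Real.sqrt 2) :
    2 - Real.sqrt 2 ≤ Γ := by
  have := abs_le.mp h1
  have := abs_le.mp h2
  subst hΓ
  have h2' : (0:ℝ) ≤ Real.sqrt 2 := Real.sqrt_nonneg 2
  nlinarith [this.1, this.2]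
end

section
/- If a TPM process has no quantum memory, meaning the initial state ϱ_{A′E} is replaced by ℳ^EB(ϱ_{A′E}) = Σ_λ μ_λ ϱ^λ_{A′} ⊗ ϱ^λ_E for an entanglement-breaking channel on E, then the process operator decomposes as W = Σ_λ μ_λ η^λ_{A′} ⊗ N^λ_{A→B}, where each η^λ_{A′} is a density operator and each N^λ_{A→B} satisfies N^λ ⪰ 0 and Tr_B N^λ = id_A. -/
open scoped Kronecker ComplexOrder
open Finset Matrix

/-- Partial trace over the second tensor factor. -/
noncomputable def ptSnd {m n : Type} [Fintype n] (M : Matrix (m × n) (m × n) ℂ) :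
    Matrix m m ℂ :=
  Matrix.of fun i j => ∑ k : n, M (i, k) (j, k)

/-- The process operator
`W = Tr_{EE′}[(ϱ^{Γ_E} ⊗ id_{ABE′})(id_{A′} ⊗ |U⟩⟩⟨⟨U|)]`
of a two-point-measurement experiment, written out entrywise, for a global
unitary `U : H_A ⊗ H_E → H_B ⊗ H_{E′}` and initial bipartite state `ϱ` on
`A′E`.  `W` acts on `A′ ⊗ A ⊗ B`. -/
noncomputable def procW {a' a b e e' : Type} [Fintype e] [Fintype e']
    (U : Matrix (b × e') (a × e) ℂ) (ϱ : Matrix (a' × e) (a' × e) ℂ) :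
    Matrix (a' × a × b) (a' × a × b) ℂ :=
  Matrix.of fun x y =>
    ∑ ε : e, ∑ ε'' : e, ∑ ε' : e',
      ϱ (x.1, ε) (y.1, ε'') * U (x.2.2, ε') (x.2.1, ε'') *
        (starRingEnd ℂ) (U (y.2.2, ε') (y.2.1, ε))

/-! `W` is linear in the initial state, and on a product state `X ⊗ σ` it factorizes as
`X ⊗ N`, where `N` is the Choi operator of the channel obtained by dilating with `U` and the
environment state `σᵀ`. This `N` is positive as a sum of Kraus conjugates, and `U†U = 1` makes
its partial trace over `B` equal to `Tr σ · id_A`. Applying this to each term of the separable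
state gives the decomposition with `η^λ = ϱ^λ_{A′}`. -/

section TPM

variable {a' a b e e' : Type} [Fintype e] [Fintype e']

noncomputable def procWLinear (U : Matrix (b × e') (a × e) ℂ) :
    Matrix (a' × e) (a' × e) ℂ →ₗ[ℂ] Matrix (a' × a × b) (a' × a × b) ℂ where
  toFun := procW U
  map_add' ϱ σ := by
    ext x y
    simp only [procW, of_apply, Matrix.add_apply, add_mul, sum_add_distrib]
  map_smul' c ϱ := by
    ext x y
    simp only [procW, of_apply, Matrix.smul_apply, smul_eq_mul, RingHom.id_apply,
      mul_sum, mul_assoc]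

/-- The Kraus operator `⟨ε'|U` of the dilation `U`, as a map `E → A ⊗ B`. -/
def krausOp (U : Matrix (b × e') (a × e) ℂ) (ε' : e') : Matrix (a × b) e ℂ :=
  of fun p ε => U (p.2, ε') (p.1, ε)

/-- The Choi operator of the channel `ρ ↦ Tr_{E′}[U (ρ ⊗ σᵀ) U†]` from `A` to `B`; the
transpose is the partial transposition `Γ_E` in the definition of `W`. -/
noncomputable def dilationChoi (U : Matrix (b × e') (a × e) ℂ) (σ : Matrix e e ℂ) :
    Matrix (a × b) (a × b) ℂ :=
  ∑ ε', krausOp U ε' * σᵀ * (krausOp U ε')ᴴ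

lemma dilationChoi_apply (U : Matrix (b × e') (a × e) ℂ) (σ : Matrix e e ℂ) (p q : a × b) :
    dilationChoi U σ p q = ∑ ε : e, ∑ ε'' : e, ∑ ε' : e',
      σ ε ε'' * U (p.2, ε') (p.1, ε'') * (starRingEnd ℂ) (U (q.2, ε') (q.1, ε)) := by
  simp only [dilationChoi, krausOp, Matrix.sum_apply, mul_apply, conjTranspose_apply,
    transpose_apply, of_apply, sum_mul, starRingEnd_apply]
  rw [sum_comm]
  refine sum_congr rfl fun ε _ => ?_
  rw [sum_comm]
  exact sum_congr rfl fun ε'' _ => sum_congr rfl fun ε' _ => by ring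

lemma Matrix.PosSemidef.dilationChoi [Fintype a] [Fintype b] (U : Matrix (b × e') (a × e) ℂ)
    {σ : Matrix e e ℂ} (hσ : σ.PosSemidef) : (dilationChoi U σ).PosSemidef :=
  posSemidef_sum _ fun ε' _ => hσ.transpose.mul_mul_conjTranspose_same (krausOp U ε')

lemma ptSnd_dilationChoi [Fintype b] [DecidableEq a] [DecidableEq e]
    {U : Matrix (b × e') (a × e) ℂ} (hU : Uᴴ * U = 1) (σ : Matrix e e ℂ) :
    ptSnd (dilationChoi U σ) = σ.trace • 1 := by
  ext i j
  have hUij : ∀ ε ε'' : e, ∑ β : b, ∑ ε' : e',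
      (starRingEnd ℂ) (U (β, ε') (j, ε)) * U (β, ε') (i, ε'') =
        (1 : Matrix a a ℂ) j i * (1 : Matrix e e ℂ) ε ε'' := by
    intro ε ε''
    have h := congrFun (congrFun hU (j, ε)) (i, ε'')
    rwa [mul_apply, Fintype.sum_prod_type, ← one_kronecker_one, kroneckerMap_apply] at h
  calc ptSnd (dilationChoi U σ) i j
      = ∑ ε : e, ∑ ε'' : e, σ ε ε'' * ∑ β : b, ∑ ε' : e',
          (starRingEnd ℂ) (U (β, ε') (j, ε)) * U (β, ε') (i, ε'') := by
        simp only [ptSnd, of_apply, dilationChoi_apply, mul_sum]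
        rw [sum_comm]
        refine sum_congr rfl fun ε _ => ?_
        rw [sum_comm]
        exact sum_congr rfl fun ε'' _ => sum_congr rfl fun β _ =>
          sum_congr rfl fun ε' _ => by ring
    _ = (σ.trace • (1 : Matrix a a ℂ)) i j := by
        simp only [hUij, one_apply, mul_ite, mul_one, mul_zero, sum_ite_eq, mem_univ, if_true,
          Matrix.smul_apply, smul_eq_mul, trace, Matrix.diag, sum_ite_irrel, sum_const_zero,
          eq_comm (a := j)]

lemma procW_kronecker (U : Matrix (b × e') (a × e) ℂ) (X : Matrix a' a' ℂ)
    (σ : Matrix e e ℂ) :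
    procW U (X ⊗ₖ σ) = X ⊗ₖ dilationChoi U σ := by
  ext x y
  simp only [procW, of_apply, kroneckerMap_apply, dilationChoi_apply, mul_sum, mul_assoc]

end TPM

theorem stmt_9_general {a' a b e e' Λ : Type}
    [Fintype a'] [Fintype a] [Fintype b] [Fintype e] [Fintype e'] [Fintype Λ]
    [DecidableEq a] [DecidableEq e]
    (U : Matrix (b × e') (a × e) ℂ)
    (hU₂ : Uᴴ * U = 1)
    (μ : Λ → ℝ)
    (ϱA' : Λ → Matrix a' a' ℂ)
    (hϱA' : ∀ l, (ϱA' l).PosSemidef ∧ (ϱA' l).trace = 1)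
    (ϱE : Λ → Matrix e e ℂ)
    (hϱE : ∀ l, (ϱE l).PosSemidef ∧ (ϱE l).trace = 1)
    (ϱ : Matrix (a' × e) (a' × e) ℂ)
    (hϱ : ϱ = ∑ l, ((μ l : ℝ) : ℂ) • (ϱA' l ⊗ₖ ϱE l)) :
    ∃ (η : Λ → Matrix a' a' ℂ) (N : Λ → Matrix (a × b) (a × b) ℂ),
      (∀ l, (η l).PosSemidef ∧ (η l).trace = 1) ∧
      (∀ l, (N l).PosSemidef ∧ ptSnd (N l) = 1) ∧
      procW U ϱ = ∑ l, ((μ l : ℝ) : ℂ) • (η l ⊗ₖ N l) := by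
  refine ⟨ϱA', fun l => dilationChoi U (ϱE l), hϱA',
    fun l => ⟨(hϱE l).1.dilationChoi U, ?_⟩, ?_⟩
  · rw [ptSnd_dilationChoi hU₂, (hϱE l).2, one_smul]
  · change procWLinear U ϱ = _
    simp only [hϱ, map_sum, map_smul]
    exact sum_congr rfl fun l _ => congrArg _ (procW_kronecker U _ _)

/-- If a TPM process has no quantum memory, i.e. the initial state
is `ℳ^EB(ϱ_{A′E}) = Σ_λ μ_λ ϱ^λ_{A′} ⊗ ϱ^λ_E` for an entanglement-breaking
channel on `E`, then the process operator decomposes as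
`W = Σ_λ μ_λ η^λ_{A′} ⊗ N^λ_{A→B}` with each `η^λ_{A′}` a density operator and
each `N^λ` the Choi operator of a channel (`N^λ ⪰ 0`, `Tr_B N^λ = id_A`). -/
theorem stmt_9 {a' a b e e' Λ : Type}
    [Fintype a'] [Fintype a] [Fintype b] [Fintype e] [Fintype e'] [Fintype Λ]
    [DecidableEq a'] [DecidableEq a] [DecidableEq b] [DecidableEq e] [DecidableEq e']
    [Nonempty a']
    (U : Matrix (b × e') (a × e) ℂ)
    (hU₁ : U * Uᴴ = 1) (hU₂ : Uᴴ * U = 1)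
    (μ : Λ → ℝ) (hμ : ∀ l, 0 ≤ μ l) (hμ1 : ∑ l, μ l = 1)
    (ϱA' : Λ → Matrix a' a' ℂ)
    (hϱA' : ∀ l, (ϱA' l).PosSemidef ∧ (ϱA' l).trace = 1)
    (ϱE : Λ → Matrix e e ℂ)
    (hϱE : ∀ l, (ϱE l).PosSemidef ∧ (ϱE l).trace = 1)
    (ϱ : Matrix (a' × e) (a' × e) ℂ)
    (hϱ : ϱ = ∑ l, ((μ l : ℝ) : ℂ) • (ϱA' l ⊗ₖ ϱE l)) :
    ∃ (η : Λ → Matrix a' a' ℂ) (N : Λ → Matrix (a × b) (a × b) ℂ),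
      (∀ l, (η l).PosSemidef ∧ (η l).trace = 1) ∧
      (∀ l, (N l).PosSemidef ∧ ptSnd (N l) = 1) ∧
      procW U ϱ = ∑ l, ((μ l : ℝ) : ℂ) • (η l ⊗ₖ N l) :=
  stmt_9_general U hU₂ μ ϱA' hϱA' ϱE hϱE ϱ hϱ
end

section
/- Tightness of the quantum bound: the process operator W₂₂₂ = |GHZ⟩⟨GHZ| + σ_x^A |GHZ⟩⟨GHZ| σ_x^A on three qubits A′, A, B, with |GHZ⟩ = (|000⟩+|111⟩)/√2, together with suitable qubit POVM assemblage E_{A|X} (measurements of ±σ_x, ±σ_z), post-measurement states ρ_A, and final measurement F_B of (σ_x+σ_z)/√2, yields Σ_{b₀,b₁} inf_x Σ_a Tr[(E_{a|x} ⊗ ρ_a ⊗ F_{b_a}) W₂₂₂] = 2 − √2. -/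
/-! For qubit operators with Bloch vectors `e, r, f` in the x–z plane one computes
`Tr[(E ⊗ ρ ⊗ F) W₂₂₂] = (1 + e_z f_z + r_x e_x f_x) / 4`. Taking `ρ_a = |±⟩⟨±|`
(so `r_x = ±1`), `E_{a|x}` the projectors along `±e` for `e ∈ {±x̂, ±ẑ}` and
`F_b` along `±(x̂ + ẑ)/√2`, the instrumental sum for fixed `b₀, b₁` becomes
`1/2 + (√2/8) (e_x (s_{b₀} + s_{b₁}) + e_z (s_{b₀} - s_{b₁}))` with signs `s_b = ±1`.
Its minimum over the four axes is `1/2 - (√2/8) max(|s_{b₀} + s_{b₁}|, |s_{b₀} - s_{b₁}|)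
= 1/2 - √2/4`, and the four choices of `(b₀, b₁)` add up to `2 - √2`. -/

open scoped Kronecker ComplexOrder
open Finset Matrix

/-- The GHZ state vector `(|000⟩ + |111⟩)/√2` on three qubits. -/
noncomputable def ghz : Fin 2 × Fin 2 × Fin 2 → ℂ :=
  fun v => if v.1 = v.2.1 ∧ v.2.1 = v.2.2 then ((1 / Real.sqrt 2 : ℝ) : ℂ) else 0

/-- `σ_x^A |GHZ⟩`: the GHZ vector with a Pauli-X applied to the middle qubit. -/
noncomputable def ghzX : Fin 2 × Fin 2 × Fin 2 → ℂ :=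
  fun v => ghz (v.1, (v.2.1 + 1, v.2.2))

/-- The process operator `W₂₂₂ = |GHZ⟩⟨GHZ| + σ_x^A |GHZ⟩⟨GHZ| σ_x^A` on the
three qubits `A′`, `A`, `B`. -/
noncomputable def W222 : Matrix (Fin 2 × Fin 2 × Fin 2) (Fin 2 × Fin 2 × Fin 2) ℂ :=
  Matrix.of fun v w =>
    ghz v * (starRingEnd ℂ) (ghz w) + ghzX v * (starRingEnd ℂ) (ghzX w)

/- The two terms of `W222` pair the diagonals `(i, i, i), (j, j, j)` and
`(i, i + 1, i), (j, j + 1, j)` of the three tensor factors. -/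
lemma trace_kronecker_mul_W222 (A B C : Matrix (Fin 2) (Fin 2) ℂ) :
    ((A ⊗ₖ (B ⊗ₖ C)) * W222).trace =
      (∑ i, ∑ j, A i j * (B i j + B (i + 1) (j + 1)) * C i j) / 2 := by
  have hc : ((1 / Real.sqrt 2 : ℝ) : ℂ) * ((1 / Real.sqrt 2 : ℝ) : ℂ) = 1 / 2 := by
    rw [← Complex.ofReal_mul, div_mul_div_comm, Real.mul_self_sqrt zero_le_two]; norm_num
  simp +decide only [Matrix.trace, Matrix.diag, Matrix.mul_apply, Fintype.sum_prod_type,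
    Fin.sum_univ_two, W222, ghz, ghzX, Matrix.kroneckerMap_apply, Matrix.of_apply,
    apply_ite (starRingEnd ℂ), Complex.conj_ofReal, map_zero, if_true, if_false, mul_zero,
    zero_mul, add_zero, zero_add, Fin.isValue, show (1 + 1 : Fin 2) = 0 from rfl, hc]
  ring

/-- The qubit operator `(1 + x σ_x + z σ_z) / 2`, with Bloch vector `(x, 0, z)`. -/
noncomputable def blochXZ (x z : ℝ) : Matrix (Fin 2) (Fin 2) ℂ :=
  !![(1 + z) / 2, x / 2; x / 2, (1 - z) / 2]

lemma blochXZ_conjTranspose (x z : ℝ) : (blochXZ x z)ᴴ = blochXZ x z := by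
  ext i j
  fin_cases i <;> fin_cases j <;> simp [blochXZ, Matrix.conjTranspose_apply]

lemma blochXZ_mul_self {x z : ℝ} (h : x ^ 2 + z ^ 2 = 1) :
    blochXZ x z * blochXZ x z = blochXZ x z := by
  have hc : ((x : ℂ) ^ 2 + (z : ℂ) ^ 2) = 1 := by exact_mod_cast h
  ext i j
  fin_cases i <;> fin_cases j <;> simp [blochXZ, Matrix.mul_apply, Fin.sum_univ_two] <;>
    first | ring1 | linear_combination (1 / 4 : ℂ) * hc

lemma blochXZ_posSemidef {x z : ℝ} (h : x ^ 2 + z ^ 2 = 1) : (blochXZ x z).PosSemidef := by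
  simpa only [blochXZ_conjTranspose, blochXZ_mul_self h] using
    Matrix.posSemidef_conjTranspose_mul_self (blochXZ x z)

lemma blochXZ_add_neg (x z : ℝ) : blochXZ x z + blochXZ (-x) (-z) = 1 := by
  ext i j
  fin_cases i <;> fin_cases j <;> simp [blochXZ] <;> ring

lemma trace_blochXZ (x z : ℝ) : (blochXZ x z).trace = 1 := by
  simp only [Matrix.trace, blochXZ, diag_apply, of_apply, cons_val', cons_val_fin_one,
    Fin.sum_univ_two, cons_val_zero, cons_val_one]
  ring

lemma trace_blochXZ_kronecker_mul_W222 (ex ez rx rz fx fz : ℝ) :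
    ((blochXZ ex ez ⊗ₖ (blochXZ rx rz ⊗ₖ blochXZ fx fz)) * W222).trace =
      ((1 + ez * fz + rx * ex * fx) / 4 : ℝ) := by
  rw [trace_kronecker_mul_W222]
  simp only [blochXZ, of_apply, cons_val', cons_val_fin_one, Fin.sum_univ_two, cons_val_zero,
    cons_val_one, Fin.isValue, Fin.reduceAdd]
  push_cast
  ring

def outcomeSign (a : Fin 2) : ℝ := if a = 0 then 1 else -1

lemma outcomeSign_zero : outcomeSign 0 = 1 := rfl

lemma outcomeSign_one : outcomeSign 1 = -1 := rfl

lemma outcomeSign_sq (a : Fin 2) : outcomeSign a ^ 2 = 1 := by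
  fin_cases a <;> norm_num [outcomeSign]

lemma sum_blochXZ_outcomeSign (x z : ℝ) :
    ∑ a, blochXZ (outcomeSign a * x) (outcomeSign a * z) = 1 := by
  simpa [Fin.sum_univ_two, outcomeSign_zero, outcomeSign_one] using blochXZ_add_neg x z

/-- The `(x, z)` Bloch components of the observables `σ_z, -σ_z, σ_x, -σ_x`. -/
def measurementAxis : Fin 4 → ℝ × ℝ := ![(0, 1), (0, -1), (1, 0), (-1, 0)]

lemma measurementAxis_norm (x : Fin 4) :
    (measurementAxis x).1 ^ 2 + (measurementAxis x).2 ^ 2 = 1 := by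
  fin_cases x <;> norm_num [measurementAxis]

lemma inf'_measurementAxis (u v : ℝ) :
    univ.inf' univ_nonempty
      (fun x : Fin 4 => (measurementAxis x).1 * u + (measurementAxis x).2 * v) = -max |u| |v| := by
  apply le_antisymm
  · rcases le_total |u| |v| with huv | huv
    · rw [max_eq_right huv]
      rcases abs_cases v with ⟨hv, -⟩ | ⟨hv, -⟩
      · exact (inf'_le _ (mem_univ 1)).trans_eq (by simp [measurementAxis, hv])
      · exact (inf'_le _ (mem_univ 0)).trans_eq (by simp [measurementAxis, hv])
    · rw [max_eq_left huv]
      rcases abs_cases u with ⟨hu, -⟩ | ⟨hu, -⟩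
      · exact (inf'_le _ (mem_univ 3)).trans_eq (by simp [measurementAxis, hu])
      · exact (inf'_le _ (mem_univ 2)).trans_eq (by simp [measurementAxis, hu])
  · have hu : |u| ≤ max |u| |v| := le_max_left _ _
    have hv : |v| ≤ max |u| |v| := le_max_right _ _
    generalize max |u| |v| = m at hu hv ⊢
    rw [abs_le'] at hu hv
    refine le_inf' _ _ fun x _ => ?_
    fin_cases x <;> simp [measurementAxis] <;> linarith

noncomputable def assemblage (a : Fin 2) (x : Fin 4) : Matrix (Fin 2) (Fin 2) ℂ :=
  blochXZ (outcomeSign a * (measurementAxis x).1) (outcomeSign a * (measurementAxis x).2)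

noncomputable def postState (a : Fin 2) : Matrix (Fin 2) (Fin 2) ℂ :=
  blochXZ (outcomeSign a) 0

noncomputable def finalPOVM (b : Fin 2) : Matrix (Fin 2) (Fin 2) ℂ :=
  blochXZ (outcomeSign b * (Real.sqrt 2 / 2)) (outcomeSign b * (Real.sqrt 2 / 2))

lemma sum_re_trace_assemblage_mul_W222 (b₀ b₁ : Fin 2) (x : Fin 4) :
    ∑ a : Fin 2, (((assemblage a x ⊗ₖ (postState a ⊗ₖ
        finalPOVM (if a = 0 then b₀ else b₁))) * W222).trace).re =
      1 / 2 + ((measurementAxis x).1 * (outcomeSign b₀ + outcomeSign b₁) +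
        (measurementAxis x).2 * (outcomeSign b₀ - outcomeSign b₁)) * (Real.sqrt 2 / 8) := by
  simp only [Fin.sum_univ_two, assemblage, postState, finalPOVM,
    trace_blochXZ_kronecker_mul_W222, Complex.ofReal_re, if_pos, one_ne_zero, if_false,
    outcomeSign_zero, outcomeSign_one]
  ring

lemma inf'_sum_re_trace_assemblage_mul_W222 (b₀ b₁ : Fin 2) :
    univ.inf' univ_nonempty (fun x : Fin 4 => ∑ a : Fin 2,
      (((assemblage a x ⊗ₖ (postState a ⊗ₖ
        finalPOVM (if a = 0 then b₀ else b₁))) * W222).trace).re) = 1 / 2 - Real.sqrt 2 / 4 := by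
  have hmono : Monotone fun t : ℝ => 1 / 2 + t * (Real.sqrt 2 / 8) :=
    fun s t hst => by dsimp only; gcongr
  have hsign : max |outcomeSign b₀ + outcomeSign b₁| |outcomeSign b₀ - outcomeSign b₁| = 2 := by
    fin_cases b₀ <;> fin_cases b₁ <;> norm_num [outcomeSign]
  simp_rw [sum_re_trace_assemblage_mul_W222]
  rw [← Function.comp_def (fun t : ℝ => 1 / 2 + t * (Real.sqrt 2 / 8)),
    ← apply_inf'_eq_inf'_comp _ _ fun _ _ => hmono.map_min, inf'_measurementAxis, hsign]
  ring

/-- Tightness of the quantum bound. The process operator `W₂₂₂`,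
together with a suitable qubit POVM assemblage `E_{A|X}` (measurements of
`±σ_x`, `±σ_z`), post-measurement states `ρ_A` and final POVM `F_B`
(measurement of `(σ_x + σ_z)/√2`), yields the instrumental value
`Σ_{b₀,b₁} inf_x Σ_a Tr[(E_{a|x} ⊗ ρ_a ⊗ F_{b_a}) W₂₂₂] = 2 − √2`. -/
theorem stmt_11 :
    ∃ (E : Fin 2 → Fin 4 → Matrix (Fin 2) (Fin 2) ℂ)
      (ρ : Fin 2 → Matrix (Fin 2) (Fin 2) ℂ)
      (F : Fin 2 → Matrix (Fin 2) (Fin 2) ℂ),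
      (∀ a x, (E a x).PosSemidef) ∧ (∀ x, ∑ a, E a x = 1) ∧
      (∀ a, (ρ a).PosSemidef ∧ (ρ a).trace = 1) ∧
      (∀ b, (F b).PosSemidef) ∧ (∑ b, F b = 1) ∧
      (∑ b₀ : Fin 2, ∑ b₁ : Fin 2, univ.inf' univ_nonempty
        (fun x : Fin 4 => ∑ a : Fin 2,
          (((E a x ⊗ₖ (ρ a ⊗ₖ F (if a = 0 then b₀ else b₁))) * W222).trace).re))
      = 2 - Real.sqrt 2 := by
  have h2 : Real.sqrt 2 ^ 2 = 2 := Real.sq_sqrt zero_le_two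
  refine ⟨assemblage, postState, finalPOVM, fun a x => blochXZ_posSemidef ?_,
    fun x => sum_blochXZ_outcomeSign _ _, fun a => ⟨blochXZ_posSemidef ?_, trace_blochXZ _ _⟩,
    fun b => blochXZ_posSemidef ?_, ?_, ?_⟩
  · rw [mul_pow, mul_pow, outcomeSign_sq, one_mul, one_mul, measurementAxis_norm]
  · rw [outcomeSign_sq]; norm_num
  · rw [mul_pow, outcomeSign_sq, div_pow, h2]; norm_num
  · exact sum_blochXZ_outcomeSign _ _
  · simp only [inf'_sum_re_trace_assemblage_mul_W222, sum_const, card_univ, Fintype.card_fin,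
      nsmul_eq_mul]
    ring
end

section
/- Joint measurability of either stage implies classicality: if correlations are given by Pr(A,B|X) = Tr[(E_{A|X} ⊗ G_{B|A}) ϱ] for a bipartite state ϱ, and the assemblage {G_{B|A=a}}_a is jointly measurable (G_{b|a} = Σ_λ h(b|a,λ) H_λ for a POVM {H_λ} and conditional distributions h), then Pr(A=a,B=b|X=x) = Σ_λ Pr(A=a, Λ=λ|X=x)·h(b|a,λ) where Pr(A=a,Λ=λ|X=x) = Tr[(E_{a|x} ⊗ H_λ)ϱ], and such correlations satisfy the instrumental inequality Σ_{b₀,b₁} inf_x Σ_a Pr(A=a,B=b_a|X=x) ≥ 1. -/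
open scoped Kronecker ComplexOrder
open Finset Matrix

private lemma psd_trace_re_nonneg {k : Type} [Fintype k] {M : Matrix k k ℂ}
    (hM : M.PosSemidef) : 0 ≤ M.trace.re := by
  classical
  have h0 : (0 : ℂ) ≤ M.trace := by
    rw [Matrix.trace]
    refine Finset.sum_nonneg fun i _ => ?_
    exact hM.diag_nonneg
  exact (Complex.le_def.mp h0).1

open scoped MatrixOrder in
private lemma trace_mul_re_nonneg {k : Type} [Fintype k] {A B : Matrix k k ℂ}
    (hA : A.PosSemidef) (hB : B.PosSemidef) : 0 ≤ ((A * B).trace).re := by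
  classical
  obtain ⟨C, hC⟩ := CStarAlgebra.nonneg_iff_eq_star_mul_self.mp hA.nonneg
  rw [Matrix.star_eq_conjTranspose] at hC; subst hC
  have : (Cᴴ * C * B).trace = (C * B * Cᴴ).trace := by
    rw [Matrix.mul_assoc, Matrix.trace_mul_comm, Matrix.mul_assoc]
  rw [this]
  exact psd_trace_re_nonneg (hB.mul_mul_conjTranspose_same C)

open scoped MatrixOrder in
private lemma kron_psd {m n : Type} [Fintype m] [Fintype n] [DecidableEq m] [DecidableEq n]
    {A : Matrix m m ℂ} {B : Matrix n n ℂ} (hA : A.PosSemidef) (hB : B.PosSemidef) :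
    (A ⊗ₖ B).PosSemidef := by
  obtain ⟨C, hC⟩ := CStarAlgebra.nonneg_iff_eq_star_mul_self.mp hA.nonneg
  rw [Matrix.star_eq_conjTranspose] at hC; subst hC
  obtain ⟨D, hD⟩ := CStarAlgebra.nonneg_iff_eq_star_mul_self.mp hB.nonneg
  rw [Matrix.star_eq_conjTranspose] at hD; subst hD
  rw [Matrix.mul_kronecker_mul]
  have hconj : Cᴴ ⊗ₖ Dᴴ = (C ⊗ₖ D)ᴴ := by
    ext ⟨i, j⟩ ⟨k, l⟩
    simp [Matrix.conjTranspose_apply, Matrix.kroneckerMap_apply, mul_comm]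
  rw [hconj]
  exact Matrix.posSemidef_conjTranspose_mul_self _

private lemma kron_sum {m n Λ : Type} [Fintype Λ] (A : Matrix m m ℂ) (M : Λ → Matrix n n ℂ) :
    A ⊗ₖ (∑ l, M l) = ∑ l, A ⊗ₖ M l := by
  ext ⟨i, j⟩ ⟨k, l⟩
  simp [Matrix.kroneckerMap_apply, Finset.mul_sum, Matrix.sum_apply]

/-- Joint measurability of the second-stage assemblage implies
classicality. If correlations are given by
`Pr(A=a, B=b | X=x) = Tr[(E_{a|x} ⊗ G_{b|a}) ϱ]` for a bipartite state `ϱ`, a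
POVM assemblage `E_{A|X}`, and a jointly measurable assemblage
`G_{b|a} = Σ_λ h(b|a,λ) H_λ` (parent POVM `{H_λ}`, post-processing `h`), then
the correlations decompose as
`Pr(A=a, B=b|X=x) = Σ_λ Tr[(E_{a|x} ⊗ H_λ)ϱ] · h(b|a,λ)` and satisfy the
instrumental inequality `Σ_{b₀,b₁} inf_x Σ_a Pr(A=a, B=b_a|X=x) ≥ 1`. -/
theorem stmt_19 {m n Λ 𝒳 : Type}
    [Fintype m] [Fintype n] [Fintype Λ] [Fintype 𝒳] [Nonempty 𝒳]
    [DecidableEq m] [DecidableEq n]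
    (ϱ : Matrix (m × n) (m × n) ℂ) (hϱ : ϱ.PosSemidef ∧ ϱ.trace = 1)
    (E : Fin 2 → 𝒳 → Matrix m m ℂ)
    (hE : ∀ a x, (E a x).PosSemidef) (hE1 : ∀ x, ∑ a, E a x = 1)
    (H : Λ → Matrix n n ℂ)
    (hH : ∀ l, (H l).PosSemidef) (hH1 : ∑ l, H l = 1)
    (h : Fin 2 → Fin 2 → Λ → ℝ)
    (hh : ∀ b a l, 0 ≤ h b a l) (hh1 : ∀ a l, ∑ b, h b a l = 1)
    (G : Fin 2 → Fin 2 → Matrix n n ℂ)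
    (hG : ∀ b a, G b a = ∑ l, ((h b a l : ℝ) : ℂ) • H l)
    (Pr : Fin 2 → Fin 2 → 𝒳 → ℝ)
    (hPr : ∀ a b x, Pr a b x = (((E a x ⊗ₖ G b a) * ϱ).trace).re) :
    (∀ a b x, Pr a b x = ∑ l, (((E a x ⊗ₖ H l) * ϱ).trace).re * h b a l) ∧
    1 ≤ ∑ b₀ : Fin 2, ∑ b₁ : Fin 2, univ.inf' univ_nonempty
      (fun x : 𝒳 => ∑ a : Fin 2, Pr a (if a = 0 then b₀ else b₁) x) := by
  classical
  -- abbreviations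
  set p : Fin 2 → Λ → 𝒳 → ℝ := fun a l x => (((E a x ⊗ₖ H l) * ϱ).trace).re with hp
  -- Part 1: the decomposition
  have hdec : ∀ a b x, Pr a b x = ∑ l, p a l x * h b a l := by
    intro a b x
    rw [hPr a b x, hG b a]
    have expand : E a x ⊗ₖ (∑ l, ((h b a l : ℝ) : ℂ) • H l)
        = ∑ l, ((h b a l : ℝ) : ℂ) • (E a x ⊗ₖ H l) := by
      rw [kron_sum]
      exact Finset.sum_congr rfl fun l _ => Matrix.kronecker_smul _ _ _
    rw [expand, Finset.sum_mul, Matrix.trace_sum]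
    rw [Complex.re_sum]
    refine Finset.sum_congr rfl fun l _ => ?_
    rw [Matrix.smul_mul, Matrix.trace_smul]
    simp [hp, mul_comm]
  refine ⟨hdec, ?_⟩
  -- nonnegativity of p
  have hp0 : ∀ a l x, 0 ≤ p a l x := fun a l x =>
    trace_mul_re_nonneg (kron_psd (hE a x) (hH l)) hϱ.1
  -- marginal q
  set q : Λ → ℝ := fun l => ((((1 : Matrix m m ℂ) ⊗ₖ H l) * ϱ).trace).re with hq
  have hmarg : ∀ l x, p 0 l x + p 1 l x = q l := by
    intro l x
    have hEsum : E 0 x + E 1 x = 1 := by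
      have := hE1 x; rwa [Fin.sum_univ_two] at this
    have : (1 : Matrix m m ℂ) ⊗ₖ H l = E 0 x ⊗ₖ H l + E 1 x ⊗ₖ H l := by
      rw [← Matrix.add_kronecker, hEsum]
    simp only [hp, hq]
    rw [this, Matrix.add_mul, Matrix.trace_add, Complex.add_re]
  have hq0 : ∀ l, 0 ≤ q l := by
    intro l
    obtain ⟨x⟩ := (inferInstance : Nonempty 𝒳)
    rw [← hmarg l x]
    exact add_nonneg (hp0 0 l x) (hp0 1 l x)
  have hqsum : ∑ l, q l = 1 := by
    have hsum1 : ∑ l, ((1 : Matrix m m ℂ) ⊗ₖ H l) = 1 := by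
      rw [← kron_sum, hH1, Matrix.one_kronecker_one]
    have : ∑ l, (((1 : Matrix m m ℂ) ⊗ₖ H l) * ϱ).trace = 1 := by
      rw [← Matrix.trace_sum, ← Finset.sum_mul, hsum1, Matrix.one_mul, hϱ.2]
    calc ∑ l, q l = (∑ l, (((1 : Matrix m m ℂ) ⊗ₖ H l) * ϱ).trace).re := by
          rw [Complex.re_sum]
      _ = 1 := by rw [this]; simp
  -- bounds on h
  have hhle1 : ∀ b a l, h b a l ≤ 1 := by
    intro b a l
    have := hh1 a l
    rw [Fin.sum_univ_two] at this
    fin_cases b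
    · show h 0 a l ≤ 1; nlinarith [hh 1 a l]
    · show h 1 a l ≤ 1; nlinarith [hh 0 a l]
  -- the key pointwise bound
  have key : ∀ (b₀ b₁ : Fin 2),
      ∑ l, q l * min (h b₀ 0 l) (h b₁ 1 l) ≤ univ.inf' univ_nonempty
        (fun x : 𝒳 => ∑ a : Fin 2, Pr a (if a = 0 then b₀ else b₁) x) := by
    intro b₀ b₁
    refine Finset.le_inf' _ _ fun x _ => ?_
    have hx : ∑ a : Fin 2, Pr a (if a = 0 then b₀ else b₁) x
        = ∑ l, (p 0 l x * h b₀ 0 l + p 1 l x * h b₁ 1 l) := by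
      rw [Fin.sum_univ_two]
      simp only [if_pos rfl]
      norm_num
      rw [hdec 0 b₀ x, hdec 1 b₁ x, ← Finset.sum_add_distrib]
    rw [hx]
    refine Finset.sum_le_sum fun l _ => ?_
    rw [← hmarg l x, add_mul]
    have h1 : p 0 l x * min (h b₀ 0 l) (h b₁ 1 l) ≤ p 0 l x * h b₀ 0 l :=
      mul_le_mul_of_nonneg_left (min_le_left _ _) (hp0 0 l x)
    have h2 : p 1 l x * min (h b₀ 0 l) (h b₁ 1 l) ≤ p 1 l x * h b₁ 1 l :=
      mul_le_mul_of_nonneg_left (min_le_right _ _) (hp0 1 l x)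
    linarith
  -- the sum over b₀ b₁ of the mins is at least 1 for each l
  have hmin : ∀ l, (1 : ℝ) ≤ ∑ b₀ : Fin 2, ∑ b₁ : Fin 2, min (h b₀ 0 l) (h b₁ 1 l) := by
    intro l
    have hab : ∀ b₀ b₁ : Fin 2, h b₀ 0 l * h b₁ 1 l ≤ min (h b₀ 0 l) (h b₁ 1 l) := by
      intro b₀ b₁
      refine le_min ?_ ?_
      · nlinarith [hh b₀ 0 l, hhle1 b₁ 1 l]
      · nlinarith [hh b₁ 1 l, hhle1 b₀ 0 l]
    have : ∑ b₀ : Fin 2, ∑ b₁ : Fin 2, h b₀ 0 l * h b₁ 1 l = 1 := by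
      have h0 := hh1 0 l
      have h1 := hh1 1 l
      rw [Fin.sum_univ_two] at h0 h1
      rw [Fin.sum_univ_two]
      rw [Fin.sum_univ_two, Fin.sum_univ_two]
      nlinarith
    calc (1 : ℝ) = ∑ b₀ : Fin 2, ∑ b₁ : Fin 2, h b₀ 0 l * h b₁ 1 l := this.symm
      _ ≤ _ := Finset.sum_le_sum fun b₀ _ => Finset.sum_le_sum fun b₁ _ => hab b₀ b₁
  -- put everything together
  calc (1 : ℝ) = ∑ l, q l := hqsum.symm
    _ ≤ ∑ l, q l * (∑ b₀ : Fin 2, ∑ b₁ : Fin 2, min (h b₀ 0 l) (h b₁ 1 l)) := by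
        refine Finset.sum_le_sum fun l _ => ?_
        have := hmin l
        nlinarith [hq0 l]
    _ = ∑ b₀ : Fin 2, ∑ b₁ : Fin 2, ∑ l, q l * min (h b₀ 0 l) (h b₁ 1 l) := by
        simp_rw [Finset.mul_sum]
        rw [Finset.sum_comm]
        exact Finset.sum_congr rfl fun b₀ _ => Finset.sum_comm
    _ ≤ _ := Finset.sum_le_sum fun b₀ _ => Finset.sum_le_sum fun b₁ _ => key b₀ b₁
end
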